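/- Let μ̂, σ̂, μ, σ, r be real numbers with σ > 0 and σ̂ > 0. Assume σ² < σ̂² and 2·((μ−r)/σ)² < ((μ̂−r)/σ̂)². Then |((μ̂−r)/σ̂)²·(σ²/σ̂²) − ((μ−r)/σ)²| < |((μ̂−r)/σ̂)² − ((μ−r)/σ)²|. -/
import Mathlib

/-- Theorem 4.2 of the paper: the variance-ratio-corrected estimate of the squared
risk premium has strictly smaller absolute error than the naive estimate. -/
theorem corrected_estimate_more_accurate
    (μ σ r μhat σhat : ℝ) (hσ : 0 < σ) (hσhat : 0 < σhat) (hμr : μ ≠ r)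
    (hvar : σ ^ 2 < σhat ^ 2)
    (hprem : 2 * ((μ - r) / σ) ^ 2 < ((μhat - r) / σhat) ^ 2) :
    |((μhat - r) / σhat) ^ 2 * (σ ^ 2 / σhat ^ 2) - ((μ - r) / σ) ^ 2|
      < |((μhat - r) / σhat) ^ 2 - ((μ - r) / σ) ^ 2| := by
  set A := ((μhat - r) / σhat) ^ 2 with hA
  set B := ((μ - r) / σ) ^ 2 with hB
  set t := σ ^ 2 / σhat ^ 2 with ht
  have hb : (μ - r) / σ ≠ 0 := div_ne_zero (sub_ne_zero.mpr hμr) hσ.ne'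
  have hB0 : 0 < B := lt_of_le_of_ne (sq_nonneg _) (Ne.symm (pow_ne_zero 2 hb))
  have hA0 : 0 < A := lt_trans (by linarith) hprem
  have ht0 : 0 < t := div_pos (pow_pos hσ 2) (pow_pos hσhat 2)
  have ht1 : t < 1 := (div_lt_one (pow_pos hσhat 2)).mpr hvar
  have habs : |A - B| = A - B := abs_of_pos (by linarith)
  rw [habs, abs_lt]
  constructor
  · nlinarith
  · nlinarith
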